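/- arXiv:1407.5030 — 3 statements merged into one kernel-verified Lean document; each statement's English description precedes it below -/
import Mathlib

section
/- In every total-payoff game, for every vertex v, the lower value equals the upper value: Val⁻(v) = Val⁺(v); i.e., total-payoff games are determined. -/
open Filter

/-- A two-player turn-based weighted game graph. `owner v = true` means that
vertex `v` belongs to player Max, `owner v = false` that it belongs to player Min.
Every vertex has at least one successor. -/
structure Game (V : Type) where
  owner : V → Bool
  E : V → V → Prop
  nonempty : ∀ v, ∃ v', E v v'
  w : V → V → ℤ

namespace Game

variable {V : Type}

/-- The (reversed) history of the first `k` vertices of `π` (most recent first). -/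
def hist (π : ℕ → V) (k : ℕ) : List V := (List.ofFn fun i : Fin k => π i).reverse

/-- A strategy: given the (reversed) list of previously visited vertices and the current
vertex, it picks a successor of the current vertex. -/
structure Strategy (g : Game V) where
  next : List V → V → V
  valid : ∀ h v, g.E v (next h v)

/-- A memoryless strategy only depends on the current vertex. -/
def Strategy.Memoryless {g : Game V} (s : g.Strategy) : Prop :=
  ∀ h h' v, s.next h v = s.next h' v

/-- A finite-memory strategy is one encoded by a deterministic Moore machine
`⟨M, m0, up, dec⟩`: the choice after a finite play is `dec` applied to the memory state
reached by reading the play (the initial vertex is not read) and to the last vertex. -/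
def Strategy.FiniteMemory {g : Game V} (s : g.Strategy) : Prop :=
  ∃ (M : Type) (_ : Fintype M) (m0 : M) (up : M → V → M) (dec : M → V → V),
    ∀ h v, s.next h v = dec (List.foldl up m0 (((h.reverse ++ [v]).drop 1))) v

variable (g : Game V)

/-- Next vertex chosen by the owner of the current vertex. -/
def step (σ τ : g.Strategy) (h : List V) (v : V) : V :=
  if g.owner v then σ.next h v else τ.next h v

/-- Current vertex and reversed history after `k` steps of the play `Play(v, σ, τ)`. -/
def playAux (σ τ : g.Strategy) (v : V) : ℕ → V × List V
  | 0 => (v, [])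
  | k+1 =>
      let p := playAux σ τ v k
      (g.step σ τ p.2 p.1, p.1 :: p.2)

/-- `Play(v, σ, τ)`: the unique play starting in `v` and conforming to the
strategy `σ` of Max and the strategy `τ` of Min. -/
def play (σ τ : g.Strategy) (v : V) (k : ℕ) : V := (g.playAux σ τ v k).1

/-- An infinite sequence of vertices is a play when consecutive vertices are linked
by edges. -/
def IsPlay (π : ℕ → V) : Prop := ∀ k, g.E (π k) (π (k+1))

/-- A play conforms to a strategy `s` of the player `p` if, whenever the current vertex
belongs to `p`, the next vertex is the one prescribed by `s`. -/
def Conforms (p : Bool) (s : g.Strategy) (π : ℕ → V) : Prop :=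
  ∀ k, g.owner (π k) = p → π (k+1) = s.next (hist π k) (π k)

/-- Total-payoff of the prefix of length `k`: the sum of the first `k` edge weights. -/
def TPfin (π : ℕ → V) (k : ℕ) : ℤ := ∑ i ∈ Finset.range k, g.w (π i) (π (i+1))

/-- Total payoff of an infinite play: `liminf` of the payoffs of its prefixes. -/
noncomputable def TP (π : ℕ → V) : EReal :=
  liminf (fun k => (((g.TPfin π k : ℤ) : ℝ) : EReal)) atTop

/-- Mean payoff of an infinite play. -/
noncomputable def MP (π : ℕ → V) : EReal :=
  liminf (fun k => ((((g.TPfin π k : ℤ) : ℝ) / (k : ℝ)) : EReal)) atTop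

open Classical in
/-- Min-cost reachability payoff with target `t`: total payoff up to the first visit
of `t`, and `+∞` if `t` is never visited. -/
noncomputable def MCR (t : V) (π : ℕ → V) : EReal :=
  if h : ∃ k, π k = t then (((g.TPfin π (Nat.find h) : ℤ) : ℝ) : EReal) else ⊤

open Classical in
/-- `MCR` payoff restricted to reaching the target among the first `i+1` vertices. -/
noncomputable def MCRbd (t : V) (i : ℕ) (π : ℕ → V) : EReal :=
  if ∃ k ≤ i, π k = t then g.MCR t π else ⊤

/-- Value of a strategy `σ` of Max from `v` : `inf_τ P(Play(v, σ, τ))`. -/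
noncomputable def valMax (P : (ℕ → V) → EReal) (v : V) (σ : g.Strategy) : EReal :=
  ⨅ τ : g.Strategy, P (g.play σ τ v)

/-- Value of a strategy `τ` of Min from `v` : `sup_σ P(Play(v, σ, τ))`. -/
noncomputable def valMin (P : (ℕ → V) → EReal) (v : V) (τ : g.Strategy) : EReal :=
  ⨆ σ : g.Strategy, P (g.play σ τ v)

/-- Lower value `Val⁻(v) = sup_σ inf_τ P(Play(v, σ, τ))`. -/
noncomputable def lowerVal (P : (ℕ → V) → EReal) (v : V) : EReal :=
  ⨆ σ : g.Strategy, g.valMax P v σ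

/-- Upper value `Val⁺(v) = inf_τ sup_σ P(Play(v, σ, τ))`. -/
noncomputable def upperVal (P : (ℕ → V) → EReal) (v : V) : EReal :=
  ⨅ τ : g.Strategy, g.valMin P v τ

end Game

/-- A min-cost reachability game: a game together with a target vertex `t` whose only
outgoing edge is a self-loop of weight `0`. -/
structure MCRGame (V : Type) extends Game V where
  t : V
  loop : E t t
  loopOnly : ∀ v, E t v → v = t
  loopZero : w t t = 0

/-- The value of a (determined) MCR game. -/
noncomputable def MCRGame.Val {V : Type} (G : MCRGame V) : V → EReal :=
  fun v => G.toGame.lowerVal (G.toGame.MCR G.t) v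

/-- The `i`-step value `val_i(v) = inf_τ sup_σ MCR_i(Play(v, σ, τ))`. -/
noncomputable def MCRGame.ival {V : Type} (G : MCRGame V) (i : ℕ) : V → EReal :=
  fun v => G.toGame.upperVal (G.toGame.MCRbd G.t i) v

/-!
Fix a real threshold `x` and unfold the game into the arena on `V × ℤ` whose second component
records the weight accumulated so far. Max wins if the counter is eventually `≥ x`, Min wins if it
is infinitely often `< x`: a Büchi game for Min. Büchi games are determined on arbitrary arenas by
the nested fixed-point construction, the ranks coming from the ordinal approximants of least fixed
points, and the winning strategies are memoryless on the unfolding, hence strategies of the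
original game that read the counter off the history. So for every `x`, either `x ≤ Val⁻(v)` or
`Val⁺(v) ≤ x`; since `Val⁻(v) ≤ Val⁺(v)`, the two values coincide.
-/

open OrdinalApprox

universe u

section LfpRank

variable {S : Type u} (f : Set S →o Set S)

/-- `s` enters the approximants of `f.lfp` at stage `lfpRank f s + 1`; the value is junk (`0`)
outside `f.lfp`. -/
noncomputable def lfpRank (s : S) : Ordinal.{u} := sInf {β | s ∈ f (lfpApprox f ⊥ β)}

variable {f}

lemma mem_lfpApprox_bot_iff {s : S} {β : Ordinal} :
    s ∈ lfpApprox f ⊥ β ↔ ∃ b < β, s ∈ f (lfpApprox f ⊥ b) := by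
  rw [lfpApprox]
  simp

lemma lfpApprox_bot_subset_lfp (β : Ordinal) : lfpApprox f ⊥ β ⊆ f.lfp :=
  lfpApprox_le_of_mem_fixedPoints f f.isFixedPt_lfp bot_le β

lemma apply_lfpApprox_bot_subset_lfp (β : Ordinal) : f (lfpApprox f ⊥ β) ⊆ f.lfp :=
  f.map_lfp ▸ f.mono (lfpApprox_bot_subset_lfp β)

lemma lfpRank_le {s : S} {β : Ordinal} (h : s ∈ f (lfpApprox f ⊥ β)) : lfpRank f s ≤ β :=
  csInf_le' h

lemma lfpRank_lt {s : S} {β : Ordinal} (h : s ∈ lfpApprox f ⊥ β) : lfpRank f s < β := by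
  obtain ⟨b, hb, hs⟩ := mem_lfpApprox_bot_iff.1 h
  exact (lfpRank_le hs).trans_lt hb

lemma mem_apply_lfpApprox_lfpRank {s : S} (h : s ∈ f.lfp) :
    s ∈ f (lfpApprox f ⊥ (lfpRank f s)) := by
  rw [← lfpApprox_ord_eq_lfp, mem_lfpApprox_bot_iff] at h
  obtain ⟨b, -, hb⟩ := h
  exact csInf_mem (⟨b, hb⟩ : {β | s ∈ f (lfpApprox f ⊥ β)}.Nonempty)

end LfpRank

section WellFoundedSeq

variable {α : Type*} [Preorder α] [WellFoundedLT α] {a : ℕ → α} {P : ℕ → Prop}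

lemma frequently_of_lt_of_not (h : ∀ k, ¬P k → a (k + 1) < a k) : ∃ᶠ k in atTop, P k := by
  suffices key : ∀ x k, a k = x → ∃ j ≥ k, P j from
    frequently_atTop.2 fun k => key _ k rfl
  intro x
  induction x using WellFoundedLT.induction with
  | _ x ih =>
    intro k hk
    by_cases hP : P k
    · exact ⟨k, le_rfl, hP⟩
    · obtain ⟨j, hj, hPj⟩ := ih (a (k + 1)) (hk ▸ h k hP) (k + 1) rfl
      exact ⟨j, by omega, hPj⟩

lemma eventually_not_of_antitone (ha : Antitone a) (h : ∀ k, P k → a (k + 1) < a k) :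
    ∀ᶠ k in atTop, ¬P k := by
  obtain ⟨_, ⟨k₀, rfl⟩, hmin⟩ := wellFounded_lt.has_min (Set.range a) (Set.range_nonempty a)
  exact eventually_atTop.2 ⟨k₀, fun k hk hP => hmin _ ⟨k + 1, rfl⟩ ((h k hP).trans_le (ha hk))⟩

end WellFoundedSeq

structure Arena (S : Type u) where
  edge : S → S → Prop
  owner : S → Bool
  total : ∀ s, ∃ s', edge s s'

namespace Arena

variable {S : Type u} (A : Arena S)

def IsPlay (π : ℕ → S) : Prop := ∀ k, A.edge (π k) (π (k + 1))

def Conforms (q : Bool) (f : S → S) (π : ℕ → S) : Prop :=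
  ∀ k, A.owner (π k) = q → π (k + 1) = f (π k)

/-- Controllable predecessor of `Z` for player `q`. -/
def cpre (q : Bool) (Z : Set S) : Set S :=
  {s | if A.owner s = q then ∃ s', A.edge s s' ∧ s' ∈ Z else ∀ s', A.edge s s' → s' ∈ Z}

variable {A} in
lemma mem_cpre_of_owner_eq {q : Bool} {Z : Set S} {s : S} (h : A.owner s = q) :
    s ∈ A.cpre q Z ↔ ∃ s', A.edge s s' ∧ s' ∈ Z := by
  simp [cpre, h]

variable {A} in
lemma mem_cpre_of_owner_ne {q : Bool} {Z : Set S} {s : S} (h : A.owner s ≠ q) :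
    s ∈ A.cpre q Z ↔ ∀ s', A.edge s s' → s' ∈ Z := by
  simp [cpre, h]

lemma cpre_mono (q : Bool) : Monotone (A.cpre q) := by
  intro Z Z' h s hs
  by_cases hq : A.owner s = q
  · obtain ⟨s', hs', hZ⟩ := (mem_cpre_of_owner_eq hq).1 hs
    exact (mem_cpre_of_owner_eq hq).2 ⟨s', hs', h hZ⟩
  · exact (mem_cpre_of_owner_ne hq).2 fun s' hs' => h ((mem_cpre_of_owner_ne hq).1 hs s' hs')

lemma compl_cpre (q : Bool) (Z : Set S) : (A.cpre q Z)ᶜ = A.cpre (!q) Zᶜ := by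
  ext s
  by_cases hq : A.owner s = q
  · have hq' : A.owner s ≠ !q := Bool.not_eq_not.2 hq
    simp [mem_cpre_of_owner_eq hq, mem_cpre_of_owner_ne hq']
  · have hq' : A.owner s = !q := Bool.eq_not.2 hq
    simp [mem_cpre_of_owner_ne hq, mem_cpre_of_owner_eq hq']

lemma mem_of_mem_cpre {q : Bool} {Z : Set S} {f : S → S} {π : ℕ → S} (hπ : A.IsPlay π)
    (hf : A.Conforms q f π) {k : ℕ} (hk : π k ∈ A.cpre q Z)
    (hfZ : A.owner (π k) = q → f (π k) ∈ Z) : π (k + 1) ∈ Z := by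
  by_cases hq : A.owner (π k) = q
  · exact hf k hq ▸ hfZ hq
  · exact (mem_cpre_of_owner_ne hq).1 hk _ (hπ k)

lemma exists_strategy_into (q : Bool) (X : S → Set S) :
    ∃ f : S → S, (∀ s, A.edge s (f s)) ∧
      ∀ π, A.IsPlay π → A.Conforms q f π → ∀ k, π k ∈ A.cpre q (X (π k)) → π (k + 1) ∈ X (π k) := by
  have choice : ∀ s, ∃ s', A.edge s s' ∧ (A.owner s = q → s ∈ A.cpre q (X s) → s' ∈ X s) := by
    intro s
    by_cases h : A.owner s = q ∧ s ∈ A.cpre q (X s)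
    · obtain ⟨s', hs', hX⟩ := (mem_cpre_of_owner_eq h.1).1 h.2
      exact ⟨s', hs', fun _ _ => hX⟩
    · obtain ⟨s', hs'⟩ := A.total s
      exact ⟨s', hs', fun hq hs => absurd ⟨hq, hs⟩ h⟩
  choose f hedge hX using choice
  exact ⟨f, hedge, fun π hπ hf k hk => A.mem_of_mem_cpre hπ hf hk fun hq => hX _ hq hk⟩

def attrOp (q : Bool) (T : Set S) : Set S →o Set S :=
  ⟨fun Y => T ∪ A.cpre q Y, fun _ _ h => Set.union_subset_union_right T (A.cpre_mono q h)⟩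

def attr (q : Bool) (T : Set S) : Set S := (A.attrOp q T).lfp

lemma attr_mono (q : Bool) : Monotone (A.attr q) := fun _ _ h =>
  OrderHom.lfp.mono fun _ => Set.union_subset_union_left _ h

lemma subset_attr (q : Bool) (T : Set S) : T ⊆ A.attr q T := by
  rw [attr, ← OrderHom.map_lfp]
  exact Set.subset_union_left

lemma cpre_attr_subset (q : Bool) (T : Set S) : A.cpre q (A.attr q T) ⊆ A.attr q T := by
  conv_rhs => rw [attr, ← OrderHom.map_lfp]
  exact Set.subset_union_right

noncomputable def attrRank (q : Bool) (T : Set S) : S → Ordinal.{u} := lfpRank (A.attrOp q T)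

lemma mem_cpre_attr_of_mem_attr {q : Bool} {T : Set S} {s : S} (hs : s ∈ A.attr q T)
    (hT : s ∉ T) :
    s ∈ A.cpre q {s' | s' ∈ A.attr q T ∧ A.attrRank q T s' < A.attrRank q T s} := by
  have hsub : lfpApprox (A.attrOp q T) ⊥ (A.attrRank q T s) ⊆
      {s' | s' ∈ A.attr q T ∧ A.attrRank q T s' < A.attrRank q T s} :=
    fun _ hs' => ⟨lfpApprox_bot_subset_lfp _ hs', lfpRank_lt hs'⟩
  exact A.cpre_mono q hsub ((mem_apply_lfpApprox_lfpRank hs).resolve_left hT)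

section Buchi

variable (p : Bool) (F : Set S)

def buchiOp : Set S →o Set S :=
  ⟨fun Z => A.attr p (F ∩ A.cpre p Z),
    fun _ _ h => A.attr_mono p (Set.inter_subset_inter_right F (A.cpre_mono p h))⟩

def coBuchiOp : Set S →o Set S :=
  ⟨fun X => (A.buchiOp p F Xᶜ)ᶜ,
    fun _ _ h => Set.compl_subset_compl.2 ((A.buchiOp p F).mono (Set.compl_subset_compl.2 h))⟩

def coBuchiRegion : Set S := (A.coBuchiOp p F).lfp

/-- The greatest fixed point of `buchiOp`, taken as the complement of the least fixed point of
its dual so that `lfpRank` also ranks the states lost by `p`. -/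
def buchiRegion : Set S := (A.coBuchiRegion p F)ᶜ

def buchiTarget : Set S := F ∩ A.cpre p (A.buchiRegion p F)

lemma attr_buchiTarget : A.attr p (A.buchiTarget p F) = A.buchiRegion p F := by
  have h : (A.buchiOp p F (A.buchiRegion p F))ᶜ = A.coBuchiRegion p F :=
    (A.coBuchiOp p F).map_lfp
  conv_rhs => rw [buchiRegion, ← h, compl_compl]
  rfl

variable {p F}

lemma mem_cpre_of_mem_buchiRegion {s : S} (hs : s ∈ A.buchiRegion p F) :
    s ∈ A.cpre p {s' | s' ∈ A.buchiRegion p F ∧ (s ∉ A.buchiTarget p F →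
      A.attrRank p (A.buchiTarget p F) s' < A.attrRank p (A.buchiTarget p F) s)} := by
  by_cases hT : s ∈ A.buchiTarget p F
  · refine A.cpre_mono p ?_ hT.2
    exact fun _ hs' => ⟨hs', fun h => absurd hT h⟩
  · rw [← A.attr_buchiTarget] at hs
    refine A.cpre_mono p ?_ (A.mem_cpre_attr_of_mem_attr hs hT)
    rintro s' ⟨hs', hrank⟩
    exact ⟨A.attr_buchiTarget p F ▸ hs', fun _ => hrank⟩

lemma mem_cpre_of_mem_coBuchiRegion {s : S} (hs : s ∈ A.coBuchiRegion p F) :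
    s ∈ A.cpre (!p) {s' | s' ∈ A.coBuchiRegion p F ∧
      lfpRank (A.coBuchiOp p F) s' ≤ lfpRank (A.coBuchiOp p F) s ∧
      (s ∈ F → lfpRank (A.coBuchiOp p F) s' < lfpRank (A.coBuchiOp p F) s)} := by
  set Y := lfpApprox (A.coBuchiOp p F) ⊥ (lfpRank (A.coBuchiOp p F) s)
  have hY : s ∉ A.attr p (F ∩ A.cpre p Yᶜ) := mem_apply_lfpApprox_lfpRank hs
  by_cases hF : s ∈ F
  · have hcpre : s ∈ A.cpre (!p) Y := by
      rw [← compl_compl Y, ← compl_cpre]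
      exact fun hc => hY (A.subset_attr p _ ⟨hF, hc⟩)
    refine A.cpre_mono (!p) (fun s' hs' => ?_) hcpre
    have hlt := lfpRank_lt hs'
    exact ⟨lfpApprox_bot_subset_lfp _ hs', hlt.le, fun _ => hlt⟩
  · have hcpre : s ∈ A.cpre (!p) (A.coBuchiOp p F Y) := by
      show s ∈ A.cpre (!p) (A.attr p (F ∩ A.cpre p Yᶜ))ᶜ
      rw [← compl_cpre]
      exact fun hc => hY (A.cpre_attr_subset p _ hc)
    refine A.cpre_mono (!p) ?_ hcpre
    exact fun _ hs' => ⟨apply_lfpApprox_bot_subset_lfp _ hs', lfpRank_le hs', fun h => absurd h hF⟩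

variable (p F)

lemma exists_buchi_strategy : ∃ f : S → S, (∀ s, A.edge s (f s)) ∧ ∀ π, A.IsPlay π →
    A.Conforms p f π → π 0 ∈ A.buchiRegion p F → ∃ᶠ k in atTop, π k ∈ F := by
  obtain ⟨f, hf, hstep⟩ := A.exists_strategy_into p fun s => {s' | s' ∈ A.buchiRegion p F ∧
    (s ∉ A.buchiTarget p F →
      A.attrRank p (A.buchiTarget p F) s' < A.attrRank p (A.buchiTarget p F) s)}
  refine ⟨f, hf, fun π hπ hconf h₀ => ?_⟩
  have step : ∀ k, π k ∈ A.buchiRegion p F → _ := fun k hk =>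
    hstep π hπ hconf k (A.mem_cpre_of_mem_buchiRegion hk)
  have hW : ∀ k, π k ∈ A.buchiRegion p F := fun k =>
    Nat.rec h₀ (fun k hk => (step k hk).1) k
  have hT : ∃ᶠ k in atTop, π k ∈ A.buchiTarget p F :=
    frequently_of_lt_of_not (a := fun k => A.attrRank p (A.buchiTarget p F) (π k))
      fun k => (step k (hW k)).2
  exact hT.mono fun _ hk => hk.1

lemma exists_coBuchi_strategy : ∃ f : S → S, (∀ s, A.edge s (f s)) ∧ ∀ π, A.IsPlay π →
    A.Conforms (!p) f π → π 0 ∈ A.coBuchiRegion p F → ∀ᶠ k in atTop, π k ∉ F := by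
  obtain ⟨f, hf, hstep⟩ := A.exists_strategy_into (!p) fun s => {s' | s' ∈ A.coBuchiRegion p F ∧
    lfpRank (A.coBuchiOp p F) s' ≤ lfpRank (A.coBuchiOp p F) s ∧
    (s ∈ F → lfpRank (A.coBuchiOp p F) s' < lfpRank (A.coBuchiOp p F) s)}
  refine ⟨f, hf, fun π hπ hconf h₀ => ?_⟩
  have step : ∀ k, π k ∈ A.coBuchiRegion p F → _ := fun k hk =>
    hstep π hπ hconf k (A.mem_cpre_of_mem_coBuchiRegion hk)
  have hL : ∀ k, π k ∈ A.coBuchiRegion p F := fun k =>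
    Nat.rec h₀ (fun k hk => (step k hk).1) k
  exact eventually_not_of_antitone (a := fun k => lfpRank (A.coBuchiOp p F) (π k))
    (antitone_nat_of_succ_le fun k => (step k (hL k)).2.1) fun k => (step k (hL k)).2.2

theorem buchi_determined (s₀ : S) :
    (∃ f : S → S, (∀ s, A.edge s (f s)) ∧ ∀ π, π 0 = s₀ → A.IsPlay π →
      A.Conforms p f π → ∃ᶠ k in atTop, π k ∈ F) ∨
    (∃ f : S → S, (∀ s, A.edge s (f s)) ∧ ∀ π, π 0 = s₀ → A.IsPlay π →
      A.Conforms (!p) f π → ∀ᶠ k in atTop, π k ∉ F) := by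
  by_cases h₀ : s₀ ∈ A.buchiRegion p F
  · obtain ⟨f, hf, hwin⟩ := A.exists_buchi_strategy p F
    exact Or.inl ⟨f, hf, fun π hπ₀ hπ hconf => hwin π hπ hconf (hπ₀ ▸ h₀)⟩
  · obtain ⟨f, hf, hwin⟩ := A.exists_coBuchi_strategy p F
    exact Or.inr ⟨f, hf, fun π hπ₀ hπ hconf => hwin π hπ hconf (hπ₀ ▸ not_not.1 h₀)⟩

end Buchi

end Arena

namespace Game

variable {V : Type} (g : Game V)

lemma hist_succ (π : ℕ → V) (k : ℕ) : hist π (k + 1) = π k :: hist π k := by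
  rw [hist, hist, List.ofFn_succ', List.concat_eq_append, List.reverse_append]
  rfl

lemma TPfin_succ (π : ℕ → V) (k : ℕ) :
    g.TPfin π (k + 1) = g.TPfin π k + g.w (π k) (π (k + 1)) :=
  Finset.sum_range_succ _ _

lemma play_succ (σ τ : g.Strategy) (v : V) (k : ℕ) :
    g.play σ τ v (k + 1) = g.step σ τ (hist (g.play σ τ v) k) (g.play σ τ v k) := by
  have hsnd : ∀ k, (g.playAux σ τ v k).2 = hist (g.play σ τ v) k := by
    intro k
    induction k with
    | zero => rfl
    | succ k ih => rw [playAux, hist_succ, ← ih]; rfl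
  rw [play, playAux, hsnd]
  rfl

lemma isPlay_play (σ τ : g.Strategy) (v : V) : g.IsPlay (g.play σ τ v) := by
  intro k
  rw [play_succ, step]
  split
  · exact σ.valid _ _
  · exact τ.valid _ _

lemma conforms_play_left (σ τ : g.Strategy) (v : V) : g.Conforms true σ (g.play σ τ v) := by
  intro k hk
  rw [play_succ, step, if_pos hk]

lemma conforms_play_right (σ τ : g.Strategy) (v : V) : g.Conforms false τ (g.play σ τ v) := by
  intro k hk
  rw [play_succ, step, if_neg (by simp [hk])]

/-- The weight of the play prefix whose reversed history is `h` and whose current vertex is `u`. -/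
def histWeight : List V → V → ℤ
  | [], _ => 0
  | x :: t, u => histWeight t x + g.w x u

lemma histWeight_hist (π : ℕ → V) (k : ℕ) : g.histWeight (hist π k) (π k) = g.TPfin π k := by
  induction k with
  | zero => simp [hist, histWeight, TPfin]
  | succ k ih => rw [hist_succ, histWeight, ih, TPfin_succ]

def unfolding : Arena (V × ℤ) where
  edge s s' := g.E s.1 s'.1 ∧ s'.2 = s.2 + g.w s.1 s'.1
  owner s := g.owner s.1
  total s :=
    let ⟨u, hu⟩ := g.nonempty s.1
    ⟨(u, s.2 + g.w s.1 u), hu, rfl⟩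

lemma unfolding_edge {s s' : V × ℤ} :
    g.unfolding.edge s s' ↔ g.E s.1 s'.1 ∧ s'.2 = s.2 + g.w s.1 s'.1 :=
  Iff.rfl

def unfoldPlay (π : ℕ → V) (k : ℕ) : V × ℤ := (π k, g.TPfin π k)

def strategyOfUnfolding (f : V × ℤ → V × ℤ) (hf : ∀ s, g.unfolding.edge s (f s)) :
    g.Strategy :=
  ⟨fun h u => (f (u, g.histWeight h u)).1,
    fun h u => (g.unfolding_edge.1 (hf (u, g.histWeight h u))).1⟩

lemma strategyOfUnfolding_next (f : V × ℤ → V × ℤ) (hf : ∀ s, g.unfolding.edge s (f s))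
    (h : List V) (u : V) : (g.strategyOfUnfolding f hf).next h u = (f (u, g.histWeight h u)).1 :=
  rfl

lemma isPlay_unfoldPlay {π : ℕ → V} (hπ : g.IsPlay π) : g.unfolding.IsPlay (g.unfoldPlay π) :=
  fun k => g.unfolding_edge.2 ⟨hπ k, g.TPfin_succ π k⟩

lemma conforms_unfoldPlay {q : Bool} {f : V × ℤ → V × ℤ} {hf : ∀ s, g.unfolding.edge s (f s)}
    {π : ℕ → V} (hconf : g.Conforms q (g.strategyOfUnfolding f hf) π) :
    g.unfolding.Conforms q f (g.unfoldPlay π) := by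
  intro k hk
  have hnext : π (k + 1) = (f (g.unfoldPlay π k)).1 := by
    rw [hconf k hk, strategyOfUnfolding_next, histWeight_hist]
    rfl
  refine Prod.ext hnext ?_
  rw [(g.unfolding_edge.1 (hf _)).2, ← hnext]
  exact g.TPfin_succ π k

lemma TP_le_of_frequently {π : ℕ → V} {x : ℝ} (h : ∃ᶠ k in atTop, (g.TPfin π k : ℝ) < x) :
    g.TP π ≤ x :=
  liminf_le_of_frequently_le' (h.mono fun _ hk => EReal.coe_le_coe_iff.2 hk.le)

lemma le_TP_of_eventually {π : ℕ → V} {x : ℝ} (h : ∀ᶠ k in atTop, x ≤ (g.TPfin π k : ℝ)) :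
    (x : EReal) ≤ g.TP π :=
  le_liminf_of_le (by isBoundedDefault) (h.mono fun _ hk => EReal.coe_le_coe_iff.2 hk)

theorem exists_threshold_strategy (x : ℝ) (v : V) :
    (∃ σ : g.Strategy, ∀ τ, (x : EReal) ≤ g.TP (g.play σ τ v)) ∨
    (∃ τ : g.Strategy, ∀ σ, g.TP (g.play σ τ v) ≤ x) := by
  rcases g.unfolding.buchi_determined false {s | (s.2 : ℝ) < x} (v, 0) with
    ⟨f, hf, hwin⟩ | ⟨f, hf, hwin⟩
  · refine Or.inr ⟨g.strategyOfUnfolding f hf, fun σ => g.TP_le_of_frequently ?_⟩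
    exact hwin _ rfl (g.isPlay_unfoldPlay (g.isPlay_play _ _ v))
      (g.conforms_unfoldPlay (g.conforms_play_right σ _ v))
  · refine Or.inl ⟨g.strategyOfUnfolding f hf, fun τ => g.le_TP_of_eventually ?_⟩
    have hw := hwin _ rfl (g.isPlay_unfoldPlay (g.isPlay_play _ τ v))
      (g.conforms_unfoldPlay (g.conforms_play_left (g.strategyOfUnfolding f hf) τ v))
    exact hw.mono fun _ hk => not_lt.1 hk

lemma lowerVal_le_upperVal (P : (ℕ → V) → EReal) (v : V) : g.lowerVal P v ≤ g.upperVal P v :=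
  iSup_le fun σ => le_iInf fun τ => (iInf_le _ τ).trans (le_iSup (fun σ' => P (g.play σ' τ v)) σ)

lemma le_lowerVal {P : (ℕ → V) → EReal} {v : V} {x : EReal} {σ : g.Strategy}
    (h : ∀ τ, x ≤ P (g.play σ τ v)) : x ≤ g.lowerVal P v :=
  le_iSup_of_le σ (le_iInf h)

lemma upperVal_le {P : (ℕ → V) → EReal} {v : V} {x : EReal} {τ : g.Strategy}
    (h : ∀ σ, P (g.play σ τ v) ≤ x) : g.upperVal P v ≤ x :=
  iInf_le_of_le τ (iSup_le h)

end Game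

lemma EReal.eq_of_le_of_forall_coe_le_or_le {a b : EReal} (hab : a ≤ b)
    (h : ∀ x : ℝ, (x : EReal) ≤ a ∨ b ≤ x) : a = b := by
  refine hab.antisymm (not_lt.1 fun hlt => ?_)
  obtain ⟨x, hax, hxb⟩ := EReal.lt_iff_exists_real_btwn.1 hlt
  rcases h x with hx | hx
  · exact hx.not_gt hax
  · exact hx.not_gt hxb

theorem statement_0_general {V : Type} (g : Game V) (v : V) :
    g.lowerVal g.TP v = g.upperVal g.TP v :=
  EReal.eq_of_le_of_forall_coe_le_or_le (g.lowerVal_le_upperVal g.TP v) fun x =>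
    (g.exists_threshold_strategy x v).imp (fun ⟨_, hσ⟩ => g.le_lowerVal hσ)
      fun ⟨_, hτ⟩ => g.upperVal_le hτ

/-- total-payoff games are determined: for every vertex the lower value
equals the upper value. -/
theorem statement_0 {V : Type} [Fintype V] (g : Game V) (v : V) :
    g.lowerVal g.TP v = g.upperVal g.TP v :=
  statement_0_general g v
end

section
/- In every min-cost reachability game, for every vertex v, the lower value equals the upper value: Val⁻(v) = Val⁺(v); i.e., min-cost reachability games are determined. -/
open Filter

/-! ### Auxiliary development for determinacy -/

namespace MCRdet

open Game

attribute [local instance] Classical.propDecidable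

variable {V : Type}

/-- Cost of a finite (forward) path. -/
def cst (g : Game V) : List V → ℤ
  | [] => 0
  | [_] => 0
  | u :: v :: l => g.w u v + cst g (v :: l)

lemma TPfin_succ (g : Game V) (π : ℕ → V) (k : ℕ) :
    g.TPfin π (k + 1) = g.TPfin π k + g.w (π k) (π (k + 1)) := by
  unfold Game.TPfin
  rw [Finset.sum_range_succ]

lemma TPfin_shift (g : Game V) (π : ℕ → V) (k : ℕ) :
    g.TPfin π (k + 1) = g.w (π 0) (π 1) + g.TPfin (fun i => π (i + 1)) k := by
  unfold Game.TPfin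
  rw [Finset.sum_range_succ' (fun i => g.w (π i) (π (i + 1))) k]
  exact add_comm _ _

lemma cst_ofFn (g : Game V) : ∀ (k : ℕ) (π : ℕ → V),
    cst g (List.ofFn fun i : Fin (k + 1) => π i) = g.TPfin π k := by
  intro k
  induction k with
  | zero => intro π; simp [cst, Game.TPfin]
  | succ k ih =>
    intro π
    have h1 : (List.ofFn fun i : Fin (k + 2) => π i)
        = π 0 :: List.ofFn fun i : Fin (k + 1) => π (i + 1) := by
      rw [List.ofFn_succ]; rfl
    have h2 : (List.ofFn fun i : Fin (k + 1) => π (i + 1))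
        = π 1 :: List.ofFn fun i : Fin k => π (i + 2) := by
      rw [List.ofFn_succ]; rfl
    rw [h1, h2, cst, ← h2, ih (fun i => π (i + 1)), TPfin_shift]

lemma hist_succ (π : ℕ → V) (k : ℕ) : hist π (k + 1) = π k :: hist π k := by
  unfold Game.hist
  rw [List.ofFn_succ']
  simp

lemma hist_forward (π : ℕ → V) (k : ℕ) :
    (hist π k).reverse ++ [π k] = List.ofFn fun i : Fin (k + 1) => π i := by
  unfold Game.hist
  rw [List.ofFn_succ']
  simp

lemma cst_hist (g : Game V) (π : ℕ → V) (k : ℕ) :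
    cst g ((hist π k).reverse ++ [π k]) = g.TPfin π k := by
  rw [hist_forward, cst_ofFn]

lemma playAux_snd (g : Game V) (σ τ : g.Strategy) (v : V) (k : ℕ) :
    (g.playAux σ τ v k).2 = hist (g.play σ τ v) k := by
  induction k with
  | zero => simp [Game.playAux, Game.hist]
  | succ k ih =>
    rw [hist_succ]
    show ((g.playAux σ τ v k).1 :: (g.playAux σ τ v k).2) = _
    rw [ih]; rfl

lemma play_succ (g : Game V) (σ τ : g.Strategy) (v : V) (k : ℕ) :
    g.play σ τ v (k + 1) = g.step σ τ (hist (g.play σ τ v) k) (g.play σ τ v k) := by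
  show (g.playAux σ τ v (k+1)).1 = _
  rw [Game.playAux]
  rw [← playAux_snd]
  rfl

lemma play_edge (g : Game V) (σ τ : g.Strategy) (v : V) (k : ℕ) :
    g.E (g.play σ τ v k) (g.play σ τ v (k + 1)) := by
  rw [play_succ]
  unfold Game.step
  split_ifs
  · exact σ.valid _ _
  · exact τ.valid _ _

section MW

variable (G : MCRGame V) (c : ℝ)

/-- `MWn n a v` : with accumulated cost `a` at vertex `v`, Min can force reaching the
target with total cost `< c` within derivation rank `n`. -/
def MWn : ℕ → ℤ → V → Prop
  | 0 => fun a v => v = G.t ∧ (a : ℝ) < c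
  | n + 1 => fun a v => MWn n a v ∨
      (if G.owner v = true then ∀ v', G.E v v' → MWn n (a + G.w v v') v'
       else ∃ v', G.E v v' ∧ MWn n (a + G.w v v') v')

lemma MWn_mono {a : ℤ} {v : V} : ∀ {m n : ℕ}, n ≤ m → MWn G c n a v → MWn G c m a v := by
  intro m
  induction m with
  | zero => intro n h hw; rwa [Nat.le_zero.mp h] at hw
  | succ m ih =>
    intro n h hw
    rcases Nat.lt_or_ge n (m + 1) with h' | h'
    · exact Or.inl (ih (Nat.lt_succ_iff.mp h') hw)
    · rwa [le_antisymm h h'] at hw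

lemma MWn_t {n : ℕ} {a : ℤ} (h : MWn G c n a G.t) : (a : ℝ) < c := by
  induction n with
  | zero => exact h.2
  | succ n ih =>
    rcases h with h | h
    · exact ih h
    · by_cases ho : G.owner G.t = true
      · rw [if_pos ho] at h
        have h2 := h G.t G.loop
        rw [G.loopZero, add_zero] at h2
        exact ih h2
      · rw [if_neg ho] at h
        obtain ⟨v', hE, hm⟩ := h
        have hv' := G.loopOnly v' hE
        subst hv'
        rw [G.loopZero, add_zero] at hm
        exact ih hm

lemma MWn_descend : ∀ (n : ℕ) {a : ℤ} {v : V}, MWn G c n a v → v ≠ G.t →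
    ∃ m, m < n ∧
      ((G.owner v = true → ∀ v', G.E v v' → MWn G c m (a + G.w v v') v') ∧
       (G.owner v = false → ∃ v', G.E v v' ∧ MWn G c m (a + G.w v v') v')) := by
  intro n
  induction n with
  | zero => intro a v h hvt; exact absurd h.1 hvt
  | succ n ih =>
    intro a v h hvt
    rcases h with h | h
    · obtain ⟨m, hm, hp⟩ := ih h hvt
      exact ⟨m, Nat.lt_succ_of_lt hm, hp⟩
    · refine ⟨n, Nat.lt_succ_self n, ?_, ?_⟩
      · intro ho; rwa [if_pos ho] at h
      · intro ho; rw [if_neg (by simp [ho])] at h; exact h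

lemma MWn_max_sup [Fintype V] {a : ℤ} {v : V} (ho : G.owner v = true)
    (h : ∀ v', G.E v v' → ∃ n, MWn G c n (a + G.w v v') v') :
    ∃ n, MWn G c n a v := by
  set f : V → ℕ := fun v' =>
    if hx : ∃ n, MWn G c n (a + G.w v v') v' then Nat.find hx else 0 with hf
  refine ⟨Finset.univ.sup f + 1, Or.inr ?_⟩
  rw [if_pos ho]
  intro v' hE
  have hx := h v' hE
  have hfv : MWn G c (f v') (a + G.w v v') v' := by
    rw [hf]; simp only [dif_pos hx]; exact Nat.find_spec hx
  exact MWn_mono G c (Finset.le_sup (Finset.mem_univ v')) hfv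

lemma MWn_min_step {a : ℤ} {v v' : V} (ho : G.owner v = false) (hE : G.E v v')
    (h : ∃ n, MWn G c n (a + G.w v v') v') : ∃ n, MWn G c n a v := by
  obtain ⟨n, hn⟩ := h
  exact ⟨n + 1, Or.inr (by rw [if_neg (by simp [ho])]; exact ⟨v', hE, hn⟩)⟩

lemma min_descend {a : ℤ} {v : V} (ho : G.owner v = false) (hvt : v ≠ G.t)
    (hex : ∃ n, MWn G c n a v) :
    ∃ v', G.E v v' ∧ ∃ m, m < Nat.find hex ∧ MWn G c m (a + G.w v v') v' := by
  obtain ⟨m, hm, hp⟩ := MWn_descend G c (Nat.find hex) (Nat.find_spec hex) hvt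
  obtain ⟨v', hE, hw⟩ := hp.2 ho
  exact ⟨v', hE, m, hm, hw⟩

lemma max_descend [Fintype V] {a : ℤ} {v : V} (ho : G.owner v = true)
    (hnm : ¬ ∃ n, MWn G c n a v) :
    ∃ v', G.E v v' ∧ ¬ ∃ n, MWn G c n (a + G.w v v') v' := by
  by_contra h
  push_neg at h
  exact hnm (MWn_max_sup G c ho fun v' hE => (h v' hE))

/-- Next-move function of Min's winning strategy. -/
noncomputable def minNext (h : List V) (v : V) : V :=
  if hz : G.owner v = false ∧ v ≠ G.t ∧
      ∃ n, MWn G c n (cst G.toGame (h.reverse ++ [v])) v then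
    Classical.choose (min_descend G c hz.1 hz.2.1 hz.2.2)
  else Classical.choose (G.toGame.nonempty v)

lemma minNext_valid : ∀ (h : List V) (v : V), G.E v (minNext G c h v) := by
  intro h v
  unfold minNext
  split_ifs with hz
  · exact (Classical.choose_spec (min_descend G c hz.1 hz.2.1 hz.2.2)).1
  · exact Classical.choose_spec (G.toGame.nonempty v)

/-- The winning strategy of Min when `MWn` holds. -/
noncomputable def minStrat : G.toGame.Strategy := ⟨minNext G c, minNext_valid G c⟩

/-- Next-move function of Max's "avoid Min's winning region" strategy. -/
noncomputable def maxNext [Fintype V] (h : List V) (v : V) : V :=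
  if hz : G.owner v = true ∧
      ¬ ∃ n, MWn G c n (cst G.toGame (h.reverse ++ [v])) v then
    Classical.choose (max_descend G c hz.1 hz.2)
  else Classical.choose (G.toGame.nonempty v)

lemma maxNext_valid [Fintype V] : ∀ (h : List V) (v : V), G.E v (maxNext G c h v) := by
  intro h v
  unfold maxNext
  split_ifs with hz
  · exact (Classical.choose_spec (max_descend G c hz.1 hz.2)).1
  · exact Classical.choose_spec (G.toGame.nonempty v)

/-- The "stay out of Min's winning region" strategy of Max. -/
noncomputable def maxStrat [Fintype V] : G.toGame.Strategy := ⟨maxNext G c, maxNext_valid G c⟩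

/-- Once at the target, the play stays there with no further cost. -/
lemma absorbed (g : Game V) (t : V) (loopOnly : ∀ v, g.E t v → v = t)
    (loopZero : g.w t t = 0) (σ τ : g.Strategy) (v : V) {m : ℕ}
    (hm : g.play σ τ v m = t) :
    ∀ j, m ≤ j → g.play σ τ v j = t ∧
      g.TPfin (g.play σ τ v) j = g.TPfin (g.play σ τ v) m := by
  intro j
  induction j with
  | zero =>
    intro h
    have h0 : m = 0 := Nat.le_zero.mp h
    rw [← h0]; exact ⟨hm, rfl⟩
  | succ j ih =>
    intro h
    rcases Nat.lt_or_ge m (j + 1) with h' | h'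
    · have hj := ih (Nat.lt_succ_iff.mp h')
      have hE := play_edge g σ τ v j
      rw [hj.1] at hE
      have hnext := loopOnly _ hE
      refine ⟨hnext, ?_⟩
      rw [TPfin_succ, hj.1, hnext, loopZero, add_zero, hj.2]
    · have h0 : m = j + 1 := le_antisymm h h'
      rw [← h0]; exact ⟨hm, rfl⟩

/-- The payoff of a play that hits the target with cost `< c` is at most `c`. -/
lemma MCR_le (G : MCRGame V) (σ τ : G.toGame.Strategy) (v : V) {m : ℕ}
    (hm : G.toGame.play σ τ v m = G.t)
    (hc : ((G.toGame.TPfin (G.toGame.play σ τ v) m : ℤ) : ℝ) < c) :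
    G.toGame.MCR G.t (G.toGame.play σ τ v) ≤ (c : EReal) := by
  unfold Game.MCR
  have hex : ∃ k, G.toGame.play σ τ v k = G.t := ⟨m, hm⟩
  rw [dif_pos hex]
  have hle : Nat.find hex ≤ m := Nat.find_le hm
  have habs := absorbed G.toGame G.t G.loopOnly G.loopZero σ τ v (Nat.find_spec hex) m hle
  rw [habs.2] at hc
  exact le_of_lt (by exact_mod_cast hc)

/-- If Min's winning predicate holds along the play against `minStrat`, the play reaches
the target with cost `< c`. -/
lemma min_reach (G : MCRGame V) (σ : G.toGame.Strategy) (v : V) :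
    ∀ N k, MWn G c N (G.toGame.TPfin (G.toGame.play σ (minStrat G c) v) k)
        (G.toGame.play σ (minStrat G c) v k) →
      ∃ m, G.toGame.play σ (minStrat G c) v m = G.t ∧
        ((G.toGame.TPfin (G.toGame.play σ (minStrat G c) v) m : ℤ) : ℝ) < c := by
  intro N
  induction N using Nat.strong_induction_on with
  | _ N ih =>
    intro k hk
    set π := G.toGame.play σ (minStrat G c) v with hπ
    by_cases hvt : π k = G.t
    · refine ⟨k, hvt, ?_⟩
      rw [hvt] at hk
      exact MWn_t G c hk
    · have hE : G.toGame.E (π k) (π (k + 1)) := play_edge G.toGame σ (minStrat G c) v k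
      by_cases ho : G.owner (π k) = true
      · -- Max moves; all successors stay winning for Min
        obtain ⟨m, hm, hp⟩ := MWn_descend G c N hk hvt
        have h2 := hp.1 ho (π (k + 1)) hE
        rw [← TPfin_succ] at h2
        exact ih m hm (k + 1) h2
      · -- Min moves according to minStrat
        have ho' : G.owner (π k) = false := by
          cases hb : G.owner (π k) <;> simp_all
        have hz : G.owner (π k) = false ∧ (π k) ≠ G.t ∧
            ∃ n, MWn G c n (cst G.toGame ((hist π k).reverse ++ [π k])) (π k) := by
          refine ⟨ho', hvt, ?_⟩
          rw [cst_hist]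
          exact ⟨N, hk⟩
        have hstep : π (k + 1) =
            Classical.choose (min_descend G c hz.1 hz.2.1 hz.2.2) := by
          have hps := play_succ G.toGame σ (minStrat G c) v k
          rw [← hπ] at hps
          rw [hps]
          unfold Game.step
          rw [if_neg (by simp [ho'])]
          exact dif_pos hz
        obtain ⟨hE', m, hm, hw⟩ :=
          Classical.choose_spec (min_descend G c hz.1 hz.2.1 hz.2.2)
        rw [← hstep, cst_hist, ← TPfin_succ] at hw
        have hfind : Nat.find hz.2.2 ≤ N := by
          apply Nat.find_le
          rw [cst_hist]
          exact hk
        exact ih m (lt_of_lt_of_le hm hfind) (k + 1) hw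

/-- If Min's winning predicate fails at the start, playing `maxStrat` keeps it failing. -/
lemma max_avoid [Fintype V] (G : MCRGame V) (τ : G.toGame.Strategy) (v : V)
    (h0 : ¬ ∃ n, MWn G c n 0 v) :
    ∀ k, ¬ ∃ n, MWn G c n (G.toGame.TPfin (G.toGame.play (maxStrat G c) τ v) k)
        (G.toGame.play (maxStrat G c) τ v k) := by
  intro k
  set π := G.toGame.play (maxStrat G c) τ v with hπ
  induction k with
  | zero =>
    have h1 : π 0 = v := rfl
    have h2 : G.toGame.TPfin π 0 = 0 := by simp [Game.TPfin]
    rw [h1, h2]; exact h0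
  | succ k ih =>
    have hE : G.toGame.E (π k) (π (k + 1)) := play_edge G.toGame (maxStrat G c) τ v k
    by_cases ho : G.owner (π k) = true
    · -- Max moves to a non-winning successor
      have hz : G.owner (π k) = true ∧ ¬ ∃ n, MWn G c n
          (cst G.toGame ((hist π k).reverse ++ [π k])) (π k) := by
        refine ⟨ho, ?_⟩
        rw [cst_hist]
        exact ih
      have hstep : π (k + 1) = Classical.choose (max_descend G c hz.1 hz.2) := by
        have hps := play_succ G.toGame (maxStrat G c) τ v k
        rw [← hπ] at hps
        rw [hps]
        unfold Game.step
        rw [if_pos ho]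
        exact dif_pos hz
      obtain ⟨hE', hnw⟩ := Classical.choose_spec (max_descend G c hz.1 hz.2)
      rw [← hstep, cst_hist, ← TPfin_succ] at hnw
      exact hnw
    · -- Min moves; a winning successor would make `π k` winning
      have ho' : G.owner (π k) = false := by
        cases hb : G.owner (π k) <;> simp_all
      intro hw
      apply ih
      rw [TPfin_succ] at hw
      exact MWn_min_step G c ho' hE hw

end MW

end MCRdet

/-- min-cost reachability games are determined: for every vertex the lower
value equals the upper value. -/
theorem statement_1 {V : Type} [Fintype V] (G : MCRGame V) (v : V) :
    G.toGame.lowerVal (G.toGame.MCR G.t) v = G.toGame.upperVal (G.toGame.MCR G.t) v := by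
  classical
  apply le_antisymm
  · -- trivial direction: sup-inf ≤ inf-sup
    unfold Game.lowerVal Game.upperVal Game.valMax Game.valMin
    apply le_iInf
    intro τ
    apply iSup_le
    intro σ
    exact le_trans (iInf_le _ τ)
      (le_iSup (fun σ' => G.toGame.MCR G.t (G.toGame.play σ' τ v)) σ)
  · by_contra hlt
    rw [not_le] at hlt
    obtain ⟨c, hc1, hc2⟩ := EReal.exists_between_coe_real hlt
    -- Step 1: Min's winning predicate must hold at `v` for threshold `c`
    have hMW : ∃ n, MCRdet.MWn G c n 0 v := by
      by_contra h0
      -- otherwise Max guarantees payoff ≥ c, so lowerVal ≥ c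
      have hge : (c : EReal) ≤ G.toGame.lowerVal (G.toGame.MCR G.t) v := by
        unfold Game.lowerVal Game.valMax
        refine le_trans ?_ (le_iSup _ (MCRdet.maxStrat G c))
        apply le_iInf
        intro τ
        have havoid := MCRdet.max_avoid c G τ v h0
        unfold Game.MCR
        split_ifs with hex
        · have hk := Nat.find_spec hex
          have hnw := havoid (Nat.find hex)
          have hge' : c ≤ ((G.toGame.TPfin (G.toGame.play (MCRdet.maxStrat G c) τ v)
              (Nat.find hex) : ℤ) : ℝ) := by
            by_contra hcc
            rw [not_le] at hcc
            exact hnw ⟨0, hk, hcc⟩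
          exact_mod_cast hge'
        · exact le_top
      exact absurd (lt_of_le_of_lt hge hc1) (lt_irrefl _)
    -- Step 2: Min's strategy guarantees payoff ≤ c, hence upperVal ≤ c < upperVal
    obtain ⟨N, hN⟩ := hMW
    have hub : G.toGame.upperVal (G.toGame.MCR G.t) v ≤ (c : EReal) := by
      unfold Game.upperVal Game.valMin
      refine le_trans (iInf_le _ (MCRdet.minStrat G c)) ?_
      apply iSup_le
      intro σ
      have h0 : G.toGame.TPfin (G.toGame.play σ (MCRdet.minStrat G c) v) 0 = 0 := by
        simp [Game.TPfin]
      have hstart : MCRdet.MWn G c N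
          (G.toGame.TPfin (G.toGame.play σ (MCRdet.minStrat G c) v) 0)
          (G.toGame.play σ (MCRdet.minStrat G c) v 0) := by
        rw [h0]
        exact hN
      obtain ⟨m, hm, hmc⟩ := MCRdet.min_reach c G σ v N 0 hstart
      exact MCRdet.MCR_le c G σ (MCRdet.minStrat G c) v hm hmc
    exact absurd (lt_of_le_of_lt hub hc2) (lt_irrefl _)
end

section
/- In an MCR game with target t in which every vertex belongs to the attractor Attr(t), the |V|-step value satisfies val_{|V|}(v) ≤ |V|·W for every vertex v. -/
open Filter

/-- The attractor sequence `Attr_i` of the target `t`. -/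
def attr {V : Type} (g : Game V) (t : V) : ℕ → Set V
  | 0 => {t}
  | n+1 => attr g t n
      ∪ {v | g.owner v = false ∧ ∃ v', g.E v v' ∧ v' ∈ attr g t n}
      ∪ {v | g.owner v = true ∧ ∀ v', g.E v v' → v' ∈ attr g t n}

/-- The attractor `Attr(t)` of the target `t`. -/
def Attr {V : Type} (g : Game V) (t : V) : Set V := ⋃ n, attr g t n


namespace Statement7

open Classical

variable {V : Type} (g : Game V) (t : V)

lemma attr_mono_succ (n : ℕ) : attr g t n ⊆ attr g t (n+1) :=
  fun v hv => Or.inl (Or.inl hv)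

lemma attr_mono : Monotone (attr g t) :=
  monotone_nat_of_le_succ (attr_mono_succ g t)

lemma attr_stab {n : ℕ} (h : attr g t (n+1) = attr g t n) :
    ∀ m, n ≤ m → attr g t m = attr g t n := by
  intro m hm
  induction m with
  | zero =>
    have hn0 : n = 0 := by omega
    subst hn0; rfl
  | succ m ih =>
    rcases Nat.lt_or_ge n (m+1) with h1 | h1
    · have ihm : attr g t m = attr g t n := ih (by omega)
      have h2 : attr g t (m+1) = attr g t (n+1) := by
        simp only [attr, ihm]
      rw [h2, h]
    · have : n = m + 1 := by omega
      rw [this]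

lemma attr_card [Fintype V] : ∀ m, attr g t m ⊆ attr g t (Fintype.card V) := by
  have hstab : ∃ n ≤ Fintype.card V, attr g t (n+1) = attr g t n := by
    by_contra hc
    push_neg at hc
    have key : ∀ n, n ≤ Fintype.card V → n < (attr g t n).ncard := by
      intro n hn
      induction n with
      | zero =>
        have : attr g t 0 = {t} := rfl
        rw [this, Set.ncard_singleton]; omega
      | succ n ih =>
        have h1 : (attr g t n).ncard < (attr g t (n+1)).ncard := by
          apply Set.ncard_lt_ncard
          · exact (attr_mono_succ g t n).ssubset_of_ne (fun he => hc n (by omega) he.symm)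
          · exact Set.toFinite _
        have := ih (by omega)
        omega
    have h1 := key (Fintype.card V) le_rfl
    have h2 : (attr g t (Fintype.card V)).ncard ≤ Fintype.card V := by
      have := Set.ncard_le_ncard (Set.subset_univ (attr g t (Fintype.card V)))
        (Set.finite_univ)
      rwa [Set.ncard_univ, Nat.card_eq_fintype_card] at this
    omega
  obtain ⟨n, hn, hstab⟩ := hstab
  intro m
  rcases le_or_gt m (Fintype.card V) with h | h
  · exact attr_mono g t h
  · rw [attr_stab g t hstab m (by omega)]
    exact attr_mono g t hn

/-- The rank of a vertex: least `n` with `v ∈ attr g t n` (0 if none). -/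
noncomputable def rank (v : V) : ℕ :=
  if h : ∃ n, v ∈ attr g t n then Nat.find h else 0

lemma rank_mem {v : V} (h : ∃ n, v ∈ attr g t n) : v ∈ attr g t (rank g t v) := by
  rw [rank, dif_pos h]; exact Nat.find_spec h

lemma rank_le {v : V} {n : ℕ} (h : v ∈ attr g t n) : rank g t v ≤ n := by
  rw [rank, dif_pos ⟨n, h⟩]; exact Nat.find_le h

lemma rank_notMem {v : V} {m : ℕ} (h : ∃ n, v ∈ attr g t n) (hm : m < rank g t v) :
    v ∉ attr g t m := fun hmem => absurd (rank_le g t hmem) (by omega)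

lemma mem_attr_zero {v : V} (h : v ∈ attr g t 0) : v = t := h

/-- The attractor strategy for Min. -/
noncomputable def minStrat : g.Strategy where
  next _ v :=
    if h : ∃ v', g.E v v' ∧ v' ∈ attr g t (rank g t v - 1) then h.choose
    else (g.nonempty v).choose
  valid h v := by
    split
    · next hh => exact hh.choose_spec.1
    · exact Exists.choose_spec (g.nonempty v)

lemma play_zero (σ τ : g.Strategy) (v : V) : g.play σ τ v 0 = v := rfl

lemma play_succ (σ τ : g.Strategy) (v : V) (k : ℕ) :
    g.play σ τ v (k+1) = g.step σ τ (g.playAux σ τ v k).2 (g.play σ τ v k) := rfl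

lemma play_edge (σ τ : g.Strategy) (v : V) (k : ℕ) :
    g.E (g.play σ τ v k) (g.play σ τ v (k+1)) := by
  rw [play_succ, Game.step]
  split
  · exact σ.valid _ _
  · exact τ.valid _ _

lemma rank_decreases (hattr : ∀ v : V, ∃ n, v ∈ attr g t n)
    (σ : g.Strategy) (v : V) {k n : ℕ}
    (hr : rank g t (g.play σ (minStrat g t) v k) = n + 1) :
    rank g t (g.play σ (minStrat g t) v (k+1)) ≤ n := by
  set u := g.play σ (minStrat g t) v k with hu
  have humem : u ∈ attr g t (n+1) := hr ▸ rank_mem g t (hattr u)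
  have hunot : u ∉ attr g t n := rank_notMem g t (hattr u) (by omega)
  rw [play_succ, Game.step, ← hu]
  split
  · -- Max vertex: all successors go into attr n
    rename_i howner
    rcases humem with (h1 | h2) | h3
    · exact absurd h1 hunot
    · rw [h2.1] at howner; simp at howner
    · exact rank_le g t (h3.2 _ (σ.valid _ u))
  · -- Min vertex: strategy picks successor in attr n
    rename_i howner
    have hmin : ∃ v', g.E u v' ∧ v' ∈ attr g t n := by
      rcases humem with (h1 | h2) | h3
      · exact absurd h1 hunot
      · exact h2.2
      · rw [h3.1] at howner; simp at howner
    have hmin' : ∃ v', g.E u v' ∧ v' ∈ attr g t (rank g t u - 1) := by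
      rw [hr]; simpa using hmin
    show rank g t ((minStrat g t).next _ u) ≤ n
    rw [minStrat]
    dsimp only
    rw [dif_pos hmin']
    have h2 := rank_le g t hmin'.choose_spec.2
    omega

lemma reaches_target (hattr : ∀ v : V, ∃ n, v ∈ attr g t n)
    (σ : g.Strategy) (v : V) :
    ∃ j ≤ rank g t v, g.play σ (minStrat g t) v j = t := by
  have key : ∀ k, (∃ j ≤ k, g.play σ (minStrat g t) v j = t) ∨
      rank g t (g.play σ (minStrat g t) v k) + k ≤ rank g t v := by
    intro k
    induction k with
    | zero => right; rw [play_zero]; omega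
    | succ k ih =>
      rcases ih with ⟨j, hj, hjt⟩ | ih
      · exact Or.inl ⟨j, by omega, hjt⟩
      · rcases Nat.eq_zero_or_pos (rank g t (g.play σ (minStrat g t) v k)) with h0 | hpos
        · left
          refine ⟨k, by omega, ?_⟩
          have := rank_mem g t (hattr (g.play σ (minStrat g t) v k))
          rw [h0] at this
          exact mem_attr_zero g t this
        · obtain ⟨n, hn⟩ : ∃ n, rank g t (g.play σ (minStrat g t) v k) = n + 1 :=
            ⟨_, (Nat.succ_pred_eq_of_pos hpos).symm⟩
          right
          have := rank_decreases g t hattr σ v hn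
          omega
  rcases key (rank g t v) with ⟨j, hj, hjt⟩ | h
  · exact ⟨j, hj, hjt⟩
  · refine ⟨rank g t v, le_rfl, ?_⟩
    have h0 : rank g t (g.play σ (minStrat g t) v (rank g t v)) = 0 := by omega
    have := rank_mem g t (hattr (g.play σ (minStrat g t) v (rank g t v)))
    rw [h0] at this
    exact mem_attr_zero g t this

lemma tpfin_bound (σ τ : g.Strategy) (v : V) (W : ℕ)
    (hW : ∀ v v', g.E v v' → |g.w v v'| ≤ (W : ℤ)) (k : ℕ) :
    g.TPfin (g.play σ τ v) k ≤ (k : ℤ) * W := by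
  rw [Game.TPfin]
  calc ∑ i ∈ Finset.range k, g.w (g.play σ τ v i) (g.play σ τ v (i+1))
      ≤ ∑ _i ∈ Finset.range k, (W : ℤ) := by
        apply Finset.sum_le_sum
        intro i _
        exact (abs_le.1 (hW _ _ (play_edge g σ τ v i))).2
    _ = (k : ℤ) * W := by simp [mul_comm]

end Statement7

/-- in an MCR game in which every vertex belongs to the attractor of the
target, `val_{|V|}(v) ≤ |V|·W` for every vertex `v`. -/
theorem statement_7 {V : Type} [Fintype V] (G : MCRGame V) (W : ℕ)
    (hW : ∀ v v', G.E v v' → |G.w v v'| ≤ (W : ℤ))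
    (hattr : ∀ v : V, v ∈ Attr G.toGame G.t) (v : V) :
    G.ival (Fintype.card V) v ≤ ((((Fintype.card V * W : ℕ) : ℤ) : ℝ) : EReal) := by
  classical
  rw [MCRGame.ival, Game.upperVal]
  set g := G.toGame
  set t := G.t
  have hattr' : ∀ v : V, ∃ n, v ∈ attr g t n := by
    intro v; exact Set.mem_iUnion.1 (hattr v)
  refine le_trans (iInf_le _ (Statement7.minStrat g t)) ?_
  rw [Game.valMin]
  refine iSup_le fun σ => ?_
  set π := g.play σ (Statement7.minStrat g t) v with hπ
  obtain ⟨j, hj, hjt⟩ := Statement7.reaches_target g t hattr' σ v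
  have hjcard : j ≤ Fintype.card V := by
    have h1 : Statement7.rank g t v ≤ Fintype.card V := by
      obtain ⟨n, hn⟩ := hattr' v
      exact Statement7.rank_le g t (Statement7.attr_card g t n hn)
    omega
  have hex : ∃ k, π k = t := ⟨j, hjt⟩
  have hbd : ∃ k ≤ Fintype.card V, π k = t := ⟨j, hjcard, hjt⟩
  rw [Game.MCRbd, if_pos hbd, Game.MCR, dif_pos hex]
  have hfind : Nat.find hex ≤ Fintype.card V := le_trans (Nat.find_le hjt) hjcard
  have h1 : g.TPfin π (Nat.find hex) ≤ ((Fintype.card V * W : ℕ) : ℤ) := by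
    calc g.TPfin π (Nat.find hex) ≤ ((Nat.find hex : ℤ)) * W :=
          Statement7.tpfin_bound g σ _ v W hW _
      _ ≤ ((Fintype.card V : ℤ)) * W := by
          apply mul_le_mul_of_nonneg_right _ (by positivity)
          exact_mod_cast hfind
      _ = ((Fintype.card V * W : ℕ) : ℤ) := by push_cast; ring
  have h2 : ((g.TPfin π (Nat.find hex) : ℤ) : ℝ) ≤ (((Fintype.card V * W : ℕ) : ℤ) : ℝ) := by
    exact_mod_cast h1
  exact EReal.coe_le_coe_iff.2 h2
end
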